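/- Let c_1,…,c_n be positive integers and define d_i = 2^{n+1}·(c_i + Σ_{j=1}^n c_j) + 2^i for i ∈ [n]. Then for all T, T' ⊆ [n] with |T| < |T'|, one has Σ_{i∈T} d_i < Σ_{i∈T'} d_i. In particular, for proper subsets T, T' ⊊ [n] with |T| > |T'| (taking d_{n+1} = 1 and cost(S) = Σ_{i∈[n+1]∖S} d_i over the ground set [n+1]), cost(T) < cost(T'). -/

import Mathlib

open Finset
open scoped BigOperators

/-- `d i = 2^(n+1) · (c i + Σ_{j=1}^n c j) + 2^i`. -/
def dBig (n : ℕ) (c : ℕ → ℕ) : ℕ → ℕ :=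
  fun i => 2 ^ (n + 1) * (c i + ∑ j ∈ Finset.Icc 1 n, c j) + 2 ^ i

/-- `d` extended to the ground set `[n+1]` by `d (n+1) = 1`. -/
def dFull (n : ℕ) (c : ℕ → ℕ) : ℕ → ℕ :=
  fun i => if i = n + 1 then 1 else dBig n c i

/-- `cost(S) = Σ_{i ∈ [n+1] ∖ S} d i`. -/
def cost (n : ℕ) (c : ℕ → ℕ) (S : Finset ℕ) : ℕ :=
  ∑ i ∈ Finset.Icc 1 (n + 1) \ S, dFull n c i

/-!
Write `P = 2^(n+1)` and `C = Σ_{j ∈ [n]} c j`. Every `d i` is `P · (c i + C)` plus a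
perturbation `2^i`, and the perturbations over any subset of `[n]` sum to less than `P`.
So a set `S ⊆ [n]` has `Σ_S d < P · ((|S| + 1) · C + 1)`, while positivity of the `c i`
gives `Σ_S d ≥ P · |S| · (C + 1)`; these two bounds separate sets of different sizes.
Complements in `[n]` reverse cardinalities, and `cost S` is `1` plus the `d`-sum over the
complement of `S` in `[n]`.
-/

namespace dBig

lemma sum_lt (n : ℕ) (c : ℕ → ℕ) {S : Finset ℕ} (hS : S ⊆ Icc 1 n) :
    ∑ i ∈ S, dBig n c i < 2 ^ (n + 1) * ((#S + 1) * ∑ j ∈ Icc 1 n, c j + 1) := by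
  set C := ∑ j ∈ Icc 1 n, c j
  have hc : ∑ i ∈ S, c i ≤ C := sum_le_sum_of_subset hS
  have hpow : ∑ i ∈ S, 2 ^ i < 2 ^ (n + 1) :=
    Nat.geomSum_lt le_rfl fun i hi => by have := mem_Icc.mp (hS hi); omega
  have hsplit : ∑ i ∈ S, dBig n c i
      = 2 ^ (n + 1) * (∑ i ∈ S, c i + #S * C) + ∑ i ∈ S, 2 ^ i := by
    simp only [dBig, sum_add_distrib, ← mul_sum, sum_const, smul_eq_mul]
    rfl
  rw [hsplit]
  calc 2 ^ (n + 1) * (∑ i ∈ S, c i + #S * C) + ∑ i ∈ S, 2 ^ i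
      < 2 ^ (n + 1) * (C + #S * C) + 2 ^ (n + 1) :=
        add_lt_add_of_le_of_lt (Nat.mul_le_mul_left _ (by omega)) hpow
    _ = 2 ^ (n + 1) * ((#S + 1) * C + 1) := by ring

lemma le_sum (n : ℕ) {c : ℕ → ℕ} (hc : ∀ i ∈ Icc 1 n, 0 < c i) {S : Finset ℕ}
    (hS : S ⊆ Icc 1 n) :
    2 ^ (n + 1) * (#S * (∑ j ∈ Icc 1 n, c j + 1)) ≤ ∑ i ∈ S, dBig n c i := by
  rw [mul_left_comm, ← smul_eq_mul (a := #S)]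
  refine card_nsmul_le_sum S _ _ fun i hi => ?_
  have := hc i (hS hi)
  calc 2 ^ (n + 1) * (∑ j ∈ Icc 1 n, c j + 1)
      ≤ 2 ^ (n + 1) * (c i + ∑ j ∈ Icc 1 n, c j) :=
        Nat.mul_le_mul_left _ (by omega)
    _ ≤ dBig n c i := Nat.le_add_right _ _

theorem sum_lt_sum_of_card_lt (n : ℕ) {c : ℕ → ℕ} (hc : ∀ i ∈ Icc 1 n, 0 < c i)
    {T T' : Finset ℕ} (hT : T ⊆ Icc 1 n) (hT' : T' ⊆ Icc 1 n) (hcard : #T < #T') :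
    ∑ i ∈ T, dBig n c i < ∑ i ∈ T', dBig n c i := by
  have hsize : (#T + 1) * ∑ j ∈ Icc 1 n, c j + 1 ≤ #T' * (∑ j ∈ Icc 1 n, c j + 1) :=
    calc (#T + 1) * ∑ j ∈ Icc 1 n, c j + 1
        ≤ (#T + 1) * (∑ j ∈ Icc 1 n, c j + 1) := by rw [mul_add_one]; omega
      _ ≤ #T' * (∑ j ∈ Icc 1 n, c j + 1) := Nat.mul_le_mul_right _ hcard
  calc ∑ i ∈ T, dBig n c i
      < 2 ^ (n + 1) * ((#T + 1) * ∑ j ∈ Icc 1 n, c j + 1) := sum_lt n c hT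
    _ ≤ 2 ^ (n + 1) * (#T' * (∑ j ∈ Icc 1 n, c j + 1)) := by gcongr
    _ ≤ ∑ i ∈ T', dBig n c i := le_sum n hc hT'

end dBig

lemma cost_eq_one_add_sum_sdiff (n : ℕ) (c : ℕ → ℕ) {S : Finset ℕ} (hS : S ⊆ Icc 1 n) :
    cost n c S = 1 + ∑ i ∈ Icc 1 n \ S, dBig n c i := by
  have hlast : n + 1 ∉ S := fun h => by simpa using hS h
  rw [cost, ← insert_Icc_right_eq_Icc_add_one (Nat.le_add_left 1 n), insert_sdiff_of_notMem _ hlast,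
    sum_insert (by simp), dFull, if_pos rfl]
  refine congrArg _ (sum_congr rfl fun i hi => ?_)
  have := mem_Icc.mp (mem_sdiff.mp hi).1
  exact if_neg (by omega)

theorem stmt_10 (n : ℕ) (c : ℕ → ℕ) (hc : ∀ i ∈ Finset.Icc 1 n, 0 < c i) :
    (∀ T ⊆ Finset.Icc 1 n, ∀ T' ⊆ Finset.Icc 1 n, T.card < T'.card →
      ∑ i ∈ T, dBig n c i < ∑ i ∈ T', dBig n c i) ∧
    (∀ T T' : Finset ℕ, T ⊂ Finset.Icc 1 n → T' ⊂ Finset.Icc 1 n →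
      T'.card < T.card → cost n c T < cost n c T') := by
  refine ⟨fun T hT T' hT' => dBig.sum_lt_sum_of_card_lt n hc hT hT', ?_⟩
  intro T T' hT hT' hcard
  rw [cost_eq_one_add_sum_sdiff n c hT.subset, cost_eq_one_add_sum_sdiff n c hT'.subset,
    add_lt_add_iff_left]
  refine dBig.sum_lt_sum_of_card_lt n hc sdiff_subset sdiff_subset ?_
  rw [card_sdiff_of_subset hT.subset, card_sdiff_of_subset hT'.subset]
  have := card_le_card hT.subset
  omega
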